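/- arXiv:2012.10265 — 2 statements merged into one kernel-verified Lean document; each statement's English description precedes it below -/
import Mathlib

section
/- Let a₁, a₂, a₃, a₄ ∈ ℂ satisfy Im(aⱼ) < 0 for j = 1,…,4 and aⱼ² ≠ aₖ² for all j ≠ k. Then (1/(π i)) ∫_ℝ y² / ∏_{j=1}^{4} ((aⱼ + y)(aⱼ − y)) dy = Σ_{j=1}^{4} aⱼ / ∏_{k=1, k ≠ j}^{4} (aₖ² − aⱼ²). -/
/-!
The integrand is a rational function of `y²`, so partial fractions over the nodes `aⱼ²` (the
barycentric Lagrange formula for the polynomial `X`) write it as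
`∑ⱼ aⱼ² / ∏_{k ≠ j} (aₖ² - aⱼ²) · (aⱼ² - y²)⁻¹`. Each term is the classical
`∫ (y² + b²)⁻¹ dy = π / b` for `Re b > 0`, taken at `b = i aⱼ`: the antiderivative
`log (b - i y) - log (b + i y)` keeps both arguments of `log` in the right half-plane, where
`log` is holomorphic, and tends to `∓ π i` as `y → ±∞`.
-/

open MeasureTheory Complex Filter Topology Polynomial Finset
open scoped Real

theorem Lagrange.eval_div_prod_sub_eq_sum {F ι : Type*} [Field F] [DecidableEq ι]
    {s : Finset ι} {v : ι → F} (hvs : Set.InjOn v s) {p : F[X]} (hp : p.degree < #s)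
    {x : F} (hx : ∀ i ∈ s, x ≠ v i) :
    p.eval x / ∏ i ∈ s, (v i - x) =
      ∑ i ∈ s, p.eval (v i) / (∏ j ∈ s.erase i, (v j - v i)) * (v i - x)⁻¹ := by
  -- Reflecting the nodes and the point through `0` turns the factors `x - vᵢ`, `vᵢ - vⱼ` of
  -- Mathlib's barycentric formula into the `vᵢ - x`, `vⱼ - vᵢ` wanted here.
  have hvs' : Set.InjOn (fun i => -v i) s := fun i hi j hj h => hvs hi hj (neg_inj.mp h)
  have hx' : ∀ i ∈ s, -x ≠ -v i := fun i hi => by simpa using hx i hi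
  have hq := congrArg (eval (-x)) (Lagrange.eq_interpolate hvs' (f := p.comp (-X))
    (by rwa [degree_comp_neg_X]))
  rw [Lagrange.eval_interpolate_not_at_node _ hx', Lagrange.eval_nodal] at hq
  simp only [eval_comp, eval_neg, eval_X, neg_neg, neg_sub_neg, Lagrange.nodalWeight,
    prod_inv_distrib] at hq
  have hprod : ∏ i ∈ s, (v i - x) ≠ 0 :=
    prod_ne_zero_iff.mpr fun i hi => sub_ne_zero.mpr (hx i hi).symm
  rw [hq, mul_div_cancel_left₀ _ hprod]
  exact sum_congr rfl fun i _ => by ring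

lemma re_sq_mul_one_add_sq_le (b : ℂ) (y : ℝ) :
    b.re ^ 2 * (1 + y ^ 2) ≤ (1 + ‖b‖ ^ 2 + b.re ^ 2) * ‖(y : ℂ) ^ 2 + b ^ 2‖ := by
  have h_factor : (y : ℂ) ^ 2 + b ^ 2 = (y + I * b) * (y - I * b) := by
    ring_nf; rw [I_sq]; ring
  have h_re_le : b.re ^ 2 ≤ ‖(y : ℂ) ^ 2 + b ^ 2‖ := by
    rw [h_factor, norm_mul, sq, ← abs_mul_abs_self]
    refine mul_le_mul ?_ ?_ (abs_nonneg _) (norm_nonneg _) <;>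
      refine le_trans (le_of_eq ?_) (abs_im_le_norm _) <;> simp
  have h_sq_le : y ^ 2 - ‖b‖ ^ 2 ≤ ‖(y : ℂ) ^ 2 + b ^ 2‖ := by
    have := norm_sub_le ((y : ℂ) ^ 2 + b ^ 2) (b ^ 2)
    simp only [add_sub_cancel_right, norm_pow, norm_real, Real.norm_eq_abs, sq_abs] at this
    linarith
  nlinarith [mul_le_mul_of_nonneg_left h_re_le (by positivity : (0 : ℝ) ≤ 1 + ‖b‖ ^ 2),
    mul_le_mul_of_nonneg_left h_sq_le (sq_nonneg b.re)]

lemma ofReal_sq_add_sq_ne_zero {b : ℂ} (hb : b.re ≠ 0) (y : ℝ) : (y : ℂ) ^ 2 + b ^ 2 ≠ 0 := by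
  have h := (by positivity : 0 < b.re ^ 2 * (1 + y ^ 2)).trans_le (re_sq_mul_one_add_sq_le b y)
  exact norm_pos_iff.mp (pos_of_mul_pos_right h (by positivity))

lemma integrable_inv_ofReal_sq_add_sq {b : ℂ} (hb : b.re ≠ 0) :
    Integrable fun y : ℝ => ((y : ℂ) ^ 2 + b ^ 2)⁻¹ := by
  have hcont : Continuous fun y : ℝ => ((y : ℂ) ^ 2 + b ^ 2)⁻¹ :=
    Continuous.inv₀ (by fun_prop) (ofReal_sq_add_sq_ne_zero hb)
  refine (integrable_inv_one_add_sq.const_mul ((1 + ‖b‖ ^ 2 + b.re ^ 2) / b.re ^ 2)).mono'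
    hcont.aestronglyMeasurable (Eventually.of_forall fun y => ?_)
  have hnorm : 0 < ‖(y : ℂ) ^ 2 + b ^ 2‖ := norm_pos_iff.mpr (ofReal_sq_add_sq_ne_zero hb y)
  rw [norm_inv, ← div_eq_mul_inv, div_div, inv_eq_one_div,
    div_le_div_iff₀ hnorm (by positivity), one_mul]
  exact re_sq_mul_one_add_sq_le b y

lemma hasDerivAt_log_sub_log {b : ℂ} (hb : 0 < b.re) (y : ℝ) :
    HasDerivAt (fun t : ℝ => log (b - I * t) - log (b + I * t))
      (-2 * I * b * ((y : ℂ) ^ 2 + b ^ 2)⁻¹) y := by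
  have hline : HasDerivAt (fun t : ℝ => I * (t : ℂ)) I y := by
    simpa using ((hasDerivAt_id y).ofReal_comp).const_mul I
  have hsub : b - I * y ∈ slitPlane := mem_slitPlane_iff.mpr (Or.inl (by simpa using hb))
  have hadd : b + I * y ∈ slitPlane := mem_slitPlane_iff.mpr (Or.inl (by simpa using hb))
  refine (((hline.const_sub b).clog_real hsub).sub
    ((hline.const_add b).clog_real hadd)).congr_deriv ?_
  have hprod : (b - I * y) * (b + I * y) = (y : ℂ) ^ 2 + b ^ 2 := by
    ring_nf; rw [I_sq]; ring
  rw [div_sub_div _ _ (slitPlane_ne_zero hsub) (slitPlane_ne_zero hadd), hprod]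
  ring

lemma tendsto_log_sub_log_atTop {b : ℂ} (hb : 0 < b.re) :
    Tendsto (fun t : ℝ => log (b - I * t) - log (b + I * t)) atTop (𝓝 (-(π * I))) := by
  have hsmall : Tendsto (fun t : ℝ => b * (t : ℂ)⁻¹) atTop (𝓝 0) := by
    simpa using ((continuous_ofReal.tendsto 0).comp tendsto_inv_atTop_zero).const_mul b
  have hlog_at : ∀ z : ℂ, z.im ≠ 0 → ContinuousAt log z := fun z hz =>
    continuousAt_clog (mem_slitPlane_iff.mpr (Or.inr hz))
  have hlim := ((hlog_at (-I) (by simp)).tendsto.comp (by simpa using hsmall.sub_const I)).sub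
    ((hlog_at I (by simp)).tendsto.comp (by simpa using hsmall.add_const I))
  rw [log_neg_I, log_I, show -(π / 2) * I - π / 2 * I = -(π * I) by ring] at hlim
  refine hlim.congr' ?_
  filter_upwards [eventually_gt_atTop 0] with t ht
  -- Factoring out `t > 0` moves the arguments of `log` to `b / t ∓ I`, which tend to `∓ I`.
  have ht0 : (t : ℂ) ≠ 0 := ofReal_ne_zero.mpr ht.ne'
  have hfactor : ∀ c : ℂ, b + c * t = t * (b * (t : ℂ)⁻¹ + c) := fun c => by
    field_simp
  have hslit : ∀ c : ℂ, c.re = 0 → b * (t : ℂ)⁻¹ + c ∈ slitPlane := fun c hc =>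
    mem_slitPlane_iff.mpr (Or.inl (by simp [hc]; positivity))
  rw [sub_eq_add_neg b, ← neg_mul, hfactor, hfactor,
    log_ofReal_mul ht (slitPlane_ne_zero (hslit _ (by simp))),
    log_ofReal_mul ht (slitPlane_ne_zero (hslit _ (by simp)))]
  simp only [Function.comp_apply, sub_eq_add_neg]
  ring

theorem integral_inv_ofReal_sq_add_sq {b : ℂ} (hb : 0 < b.re) :
    ∫ y : ℝ, ((y : ℂ) ^ 2 + b ^ 2)⁻¹ = π / b := by
  have hb0 : b ≠ 0 := fun h => by simp [h] at hb
  have hbot : Tendsto (fun t : ℝ => log (b - I * t) - log (b + I * t)) atBot (𝓝 (π * I)) := by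
    have h := ((tendsto_log_sub_log_atTop hb).comp tendsto_neg_atBot_atTop).neg
    rw [neg_neg] at h
    refine h.congr fun t => ?_
    simp only [Function.comp_apply, ofReal_neg]
    ring_nf
  have h := integral_of_hasDerivAt_of_tendsto (hasDerivAt_log_sub_log hb)
    ((integrable_inv_ofReal_sq_add_sq hb.ne').const_mul _) hbot (tendsto_log_sub_log_atTop hb)
  set J := ∫ y : ℝ, ((y : ℂ) ^ 2 + b ^ 2)⁻¹
  rw [integral_const_mul] at h
  rw [eq_div_iff hb0]
  linear_combination (I / 2) * h + (b * J - π) * I_sq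

lemma inv_sq_sub_ofReal_sq_eq (a : ℂ) (y : ℝ) :
    (a ^ 2 - (y : ℂ) ^ 2)⁻¹ = -((y : ℂ) ^ 2 + (I * a) ^ 2)⁻¹ := by
  rw [← inv_neg, mul_pow, I_sq]
  ring

lemma ofReal_sq_ne_sq {a : ℂ} (ha : a.im ≠ 0) (y : ℝ) : (y : ℂ) ^ 2 ≠ a ^ 2 := by
  have h := ofReal_sq_add_sq_ne_zero (b := I * a) (by simpa using ha) y
  rw [mul_pow, I_sq, neg_one_mul, ← sub_eq_add_neg] at h
  exact sub_ne_zero.mp h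

lemma integrable_inv_sq_sub_ofReal_sq {a : ℂ} (ha : a.im ≠ 0) :
    Integrable fun y : ℝ => (a ^ 2 - (y : ℂ) ^ 2)⁻¹ := by
  simp_rw [inv_sq_sub_ofReal_sq_eq]
  exact (integrable_inv_ofReal_sq_add_sq (by simpa using ha)).neg

theorem integral_inv_sq_sub_ofReal_sq {a : ℂ} (ha : a.im < 0) :
    ∫ y : ℝ, (a ^ 2 - (y : ℂ) ^ 2)⁻¹ = π * I / a := by
  have ha0 : a ≠ 0 := fun h => by simp [h] at ha
  simp_rw [inv_sq_sub_ofReal_sq_eq]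
  rw [integral_neg, integral_inv_ofReal_sq_add_sq (by simpa using ha)]
  field_simp
  rw [I_sq]

/-- Residue-sum form of the first example rational beta integral: for
`a₁,…,a₄ ∈ ℂ` with negative imaginary parts and pairwise distinct squares,
`(1/(π i)) ∫_ℝ y² / ∏ⱼ (aⱼ+y)(aⱼ−y) dy = Σⱼ aⱼ / ∏_{k≠j} (aₖ²−aⱼ²)`. -/
theorem rational_beta_deBranges_Wilson_residues (a : Fin 4 → ℂ)
    (him : ∀ j, (a j).im < 0)
    (hne : ∀ j k, j ≠ k → a j ^ 2 ≠ a k ^ 2) :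
    (1 / ((Real.pi : ℂ) * Complex.I)) *
        ∫ y : ℝ, ((y : ℂ) ^ 2) / ∏ j, ((a j + (y : ℂ)) * (a j - (y : ℂ))) =
      ∑ j, a j / ∏ k ∈ Finset.univ.erase j, (a k ^ 2 - a j ^ 2) := by
  have hnodes : Set.InjOn (fun j => a j ^ 2) (univ : Finset (Fin 4)) :=
    fun j _ k _ h => by_contra fun hjk => hne j k hjk h
  have hpf : ∀ y : ℝ, (y : ℂ) ^ 2 / ∏ j, ((a j + y) * (a j - y)) =
      ∑ j, a j ^ 2 / (∏ k ∈ univ.erase j, (a k ^ 2 - a j ^ 2)) * (a j ^ 2 - (y : ℂ) ^ 2)⁻¹ :=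
    fun y => by
      simp_rw [← sq_sub_sq]
      simpa using Lagrange.eval_div_prod_sub_eq_sum hnodes (p := X) (by simp [degree_X])
        (x := (y : ℂ) ^ 2) fun j _ => ofReal_sq_ne_sq (him j).ne y
  simp_rw [hpf]
  rw [integral_finsetSum _ fun j _ => (integrable_inv_sq_sub_ofReal_sq (him j).ne).const_mul _,
    mul_sum]
  refine sum_congr rfl fun j _ => ?_
  have ha0 : a j ≠ 0 := fun h => by simpa [h] using him j
  rw [integral_const_mul, integral_inv_sq_sub_ofReal_sq (him j)]
  field_simp
end

section
/- Let a₁, a₂, a₃, a₄ ∈ ℂ satisfy aⱼ² ≠ aₖ² for all j ≠ k (this implies in particular aⱼ + aₖ ≠ 0 for j ≠ k). Then Σ_{j=1}^{4} aⱼ / ∏_{k=1, k ≠ j}^{4} (aₖ² − aⱼ²) = −(a₁ + a₂ + a₃ + a₄) / ∏_{1 ≤ j < k ≤ 4} (aⱼ + aₖ). -/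
open Finset

set_option maxHeartbeats 4000000 in
/-- Rational identity in four complex variables: if `aⱼ² ≠ aₖ²` for `j ≠ k`
then `Σⱼ aⱼ / ∏_{k≠j} (aₖ²−aⱼ²) = −(a₁+a₂+a₃+a₄)/∏_{j<k}(aⱼ+aₖ)`. -/
theorem rational_identity_four (a : Fin 4 → ℂ)
    (hne : ∀ j k, j ≠ k → a j ^ 2 ≠ a k ^ 2) :
    ∑ j, a j / ∏ k ∈ Finset.univ.erase j, (a k ^ 2 - a j ^ 2) =
      -(a 0 + a 1 + a 2 + a 3) /
        ∏ p ∈ Finset.univ.filter (fun p : Fin 4 × Fin 4 => p.1 < p.2),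
          (a p.1 + a p.2) := by
  have hd : ∀ j k : Fin 4, j ≠ k → a k ^ 2 - a j ^ 2 ≠ 0 := fun j k h => by
    have := hne k j h.symm; intro hc; exact this (by linear_combination hc)
  have hs : ∀ j k : Fin 4, j ≠ k → a j + a k ≠ 0 := fun j k h hc => by
    exact hne j k h (by linear_combination (a j - a k) * hc)
  have e0 : (univ.erase (0 : Fin 4)) = {1, 2, 3} := by decide
  have e1 : (univ.erase (1 : Fin 4)) = {0, 2, 3} := by decide
  have e2 : (univ.erase (2 : Fin 4)) = {0, 1, 3} := by decide
  have e3 : (univ.erase (3 : Fin 4)) = {0, 1, 2} := by decide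
  have ef : (univ.filter (fun p : Fin 4 × Fin 4 => p.1 < p.2)) =
      {((0:Fin 4),(1:Fin 4)), (0,2), (0,3), (1,2), (1,3), (2,3)} := by decide
  rw [Fin.sum_univ_four, e0, e1, e2, e3, ef]
  simp only [show ((0:Fin 4)=1)=False from by decide, show ((0:Fin 4)=2)=False from by decide, show ((0:Fin 4)=3)=False from by decide, show ((1:Fin 4)=2)=False from by decide, show ((1:Fin 4)=3)=False from by decide, show ((2:Fin 4)=3)=False from by decide, Finset.prod_insert, Finset.mem_insert, Finset.mem_singleton,
    Finset.prod_singleton, Prod.mk.injEq, not_or, not_false_iff, and_true, true_and, or_false, false_or]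
  rw [Finset.prod_insert (by decide), Finset.prod_insert (by decide),
    Finset.prod_insert (by decide), Finset.prod_insert (by decide),
    Finset.prod_insert (by decide), Finset.prod_singleton]
  have d0 := mul_ne_zero (hd 0 1 (by decide)) (mul_ne_zero (hd 0 2 (by decide)) (hd 0 3 (by decide)))
  have d1 := mul_ne_zero (hd 1 0 (by decide)) (mul_ne_zero (hd 1 2 (by decide)) (hd 1 3 (by decide)))
  have d2 := mul_ne_zero (hd 2 0 (by decide)) (mul_ne_zero (hd 2 1 (by decide)) (hd 2 3 (by decide)))
  have d3 := mul_ne_zero (hd 3 0 (by decide)) (mul_ne_zero (hd 3 1 (by decide)) (hd 3 2 (by decide)))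
  have dp := mul_ne_zero (hs 0 1 (by decide)) (mul_ne_zero (hs 0 2 (by decide))
    (mul_ne_zero (hs 0 3 (by decide)) (mul_ne_zero (hs 1 2 (by decide))
      (mul_ne_zero (hs 1 3 (by decide)) (hs 2 3 (by decide))))))
  rw [div_add_div _ _ d0 d1, div_add_div _ _ (mul_ne_zero d0 d1) d2,
    div_add_div _ _ (mul_ne_zero (mul_ne_zero d0 d1) d2) d3,
    div_eq_div_iff (mul_ne_zero (mul_ne_zero (mul_ne_zero d0 d1) d2) d3) dp]
  ring
end
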